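/- arXiv:1508.01907 — 4 statements merged into one kernel-verified Lean document; each statement's English description precedes it below -/
import Mathlib

section
/- Let α be a probability distribution on [d], let w be a random word of length n with i.i.d. letters drawn from α, and let λ = shRSK(w). Then the vector of expectations (E λ_1, ..., E λ_d) majorizes (α_1 n, ..., α_d n), where α is sorted in decreasing order. -/
/-- The maximal total length of `k` disjoint nondecreasing subsequences of the word `w`;
by Greene's theorem this equals `λ₁ + ⋯ + λ_k` where `λ = shRSK w`. -/
noncomputable def greene {n d : ℕ} (w : Fin n → Fin d) (k : ℕ) : ℕ :=
  sSup {m | ∃ S : Finset (Fin n),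
    (∃ c : Fin n → Fin k, ∀ i ∈ S, ∀ j ∈ S, c i = c j → i ≤ j → w i ≤ w j) ∧ S.card = m}

lemma greene_bdd {n d : ℕ} (w : Fin n → Fin d) (k : ℕ) :
    ∀ m ∈ {m | ∃ S : Finset (Fin n),
      (∃ c : Fin n → Fin k, ∀ i ∈ S, ∀ j ∈ S, c i = c j → i ≤ j → w i ≤ w j) ∧ S.card = m},
      m ≤ n := by
  rintro m ⟨S, _, rfl⟩
  simpa using S.card_le_univ

lemma greene_ge {n d : ℕ} (w : Fin n → Fin d) (k : ℕ) (S : Finset (Fin n))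
    (c : Fin n → Fin k) (hc : ∀ i ∈ S, ∀ j ∈ S, c i = c j → i ≤ j → w i ≤ w j) :
    S.card ≤ greene w k :=
  le_csSup ⟨n, greene_bdd w k⟩ ⟨S, ⟨c, hc⟩, rfl⟩

lemma greene_le {n d : ℕ} (w : Fin n → Fin d) (k : ℕ) : greene w k ≤ n := by
  by_cases h : {m | ∃ S : Finset (Fin n),
      (∃ c : Fin n → Fin k, ∀ i ∈ S, ∀ j ∈ S, c i = c j → i ≤ j → w i ≤ w j) ∧ S.card = m}.Nonempty
  · exact csSup_le h (greene_bdd w k)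
  · simp only [greene, Set.not_nonempty_iff_eq_empty.mp h, csSup_empty]
    exact Nat.zero_le n

lemma greene_top {n d : ℕ} (w : Fin n → Fin d) : greene w d = n := by
  refine le_antisymm (greene_le w d) ?_
  have := greene_ge w d Finset.univ w (fun i _ j _ h _ => le_of_eq h)
  simpa using this

lemma sum_prod_eq {n d : ℕ} (f : Fin n → Fin d → ℝ) :
    ∑ w : Fin n → Fin d, ∏ t, f t (w t) = ∏ t, ∑ i, f t i := by
  have := Finset.prod_univ_sum (fun _ : Fin n => (Finset.univ : Finset (Fin d))) f
  simpa [Fintype.piFinset_univ] using this.symm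

/-- for `λ ~ SW^n(α)` with `α` sorted decreasing,
`(E λ₁, …, E λ_d)` majorizes `(α₁ n, …, α_d n)`: the expectations of the partial sums
`λ₁ + ⋯ + λ_k = greene w k` dominate the prefix sums of `α·n`, with equality at `k = d`. -/
theorem stmt_2 (n d : ℕ) (α : Fin d → ℝ)
    (hnn : ∀ i, 0 ≤ α i) (hsum : ∑ i, α i = 1) (hsort : Antitone α) :
    (∀ k ≤ d,
      (n : ℝ) * ∑ i ∈ Finset.univ.filter (fun i : Fin d => (i : ℕ) < k), α i ≤
        ∑ w : Fin n → Fin d, (∏ t, α (w t)) * (greene w k : ℝ)) ∧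
    ∑ w : Fin n → Fin d, (∏ t, α (w t)) * (greene w d : ℝ) = n := by
  have hprod_nn : ∀ w : Fin n → Fin d, (0:ℝ) ≤ ∏ t, α (w t) :=
    fun w => Finset.prod_nonneg fun t _ => hnn (w t)
  have htotal : ∑ w : Fin n → Fin d, ∏ t, α (w t) = 1 := by
    rw [sum_prod_eq]
    simp [hsum]
  constructor
  · intro k hk
    rcases Nat.eq_zero_or_pos k with rfl | hkpos
    · simp only [Nat.not_lt_zero, Finset.filter_false, Finset.sum_empty, mul_zero]
      exact Finset.sum_nonneg fun w _ =>
        mul_nonneg (hprod_nn w) (Nat.cast_nonneg _)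
    · -- expectation of the number of letters < k
      have hEcard : ∑ w : Fin n → Fin d,
          (∏ t, α (w t)) * ((Finset.univ.filter (fun t => ((w t : ℕ)) < k)).card : ℝ)
          = (n : ℝ) * ∑ i ∈ Finset.univ.filter (fun i : Fin d => (i : ℕ) < k), α i := by
        have hcard : ∀ w : Fin n → Fin d,
            ((Finset.univ.filter (fun t => ((w t : ℕ)) < k)).card : ℝ)
            = ∑ t : Fin n, (if ((w t : ℕ)) < k then (1:ℝ) else 0) := by
          intro w
          exact (Finset.sum_boole _ _).symm
        calc ∑ w : Fin n → Fin d,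
              (∏ t, α (w t)) * ((Finset.univ.filter (fun t => ((w t : ℕ)) < k)).card : ℝ)
            = ∑ w : Fin n → Fin d, ∑ t : Fin n,
                (∏ s, α (w s)) * (if ((w t : ℕ)) < k then (1:ℝ) else 0) := by
              refine Finset.sum_congr rfl fun w _ => ?_
              rw [hcard, Finset.mul_sum]
          _ = ∑ t : Fin n, ∑ w : Fin n → Fin d,
                (∏ s, α (w s)) * (if ((w t : ℕ)) < k then (1:ℝ) else 0) :=
              Finset.sum_comm
          _ = ∑ t : Fin n, ∑ w : Fin n → Fin d,
                ∏ s, (if s = t then (if ((w s : ℕ)) < k then α (w s) else 0) else α (w s)) := by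
              refine Finset.sum_congr rfl fun t _ => Finset.sum_congr rfl fun w _ => ?_
              rw [← Finset.prod_erase_mul _ _ (Finset.mem_univ t),
                  ← Finset.prod_erase_mul _ _ (Finset.mem_univ t), mul_assoc]
              congr 1
              · exact Finset.prod_congr rfl fun s hs => by
                  simp [Finset.ne_of_mem_erase hs]
              · by_cases h : ((w t : ℕ)) < k <;> simp [h]
          _ = ∑ t : Fin n, ∏ s : Fin n, ∑ i : Fin d,
                (if s = t then (if ((i : ℕ)) < k then α i else 0) else α i) := by
              refine Finset.sum_congr rfl fun t _ => ?_
              exact sum_prod_eq (fun s i => if s = t then (if ((i : ℕ)) < k then α i else 0) else α i)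
          _ = ∑ t : Fin n, ∑ i ∈ Finset.univ.filter (fun i : Fin d => (i : ℕ) < k), α i := by
              refine Finset.sum_congr rfl fun t _ => ?_
              rw [Finset.prod_eq_single t (fun s _ hs => by simp [hs, hsum])
                    (fun h => absurd (Finset.mem_univ t) h)]
              simp [Finset.sum_filter]
          _ = (n : ℝ) * ∑ i ∈ Finset.univ.filter (fun i : Fin d => (i : ℕ) < k), α i := by
              rw [Finset.sum_const, Finset.card_univ, Fintype.card_fin, nsmul_eq_mul]
      rw [← hEcard]
      refine Finset.sum_le_sum fun w _ => ?_
      refine mul_le_mul_of_nonneg_left ?_ (hprod_nn w)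
      have hle : (Finset.univ.filter (fun t => ((w t : ℕ)) < k)).card ≤ greene w k := by
        refine greene_ge w k _ (fun t => if h : ((w t : ℕ)) < k then ⟨w t, h⟩ else ⟨0, hkpos⟩)
          fun i hi j hj hc _ => ?_
        simp only [Finset.mem_filter] at hi hj
        rw [dif_pos hi.2, dif_pos hj.2] at hc
        have : ((w i : ℕ)) = ((w j : ℕ)) := by
          have := congrArg Fin.val hc
          simpa using this
        exact le_of_eq (Fin.ext this)

      exact_mod_cast hle
  · have : ∀ w : Fin n → Fin d, (greene w d : ℝ) = n := fun w => by rw [greene_top]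
    simp only [this, ← Finset.sum_mul, htotal, one_mul]
end

section
/- Let 0 < r ≤ 1/2, let n ≥ 1 and 0 ≤ ℓ < n/2 be integers, and let h ~ Binomial(n, r). Define L_r(ℓ) = Pr[h ≤ ℓ] + Pr[h ≥ n - ℓ]. Then the derivative of L_r(ℓ) with respect to r is nonpositive; equivalently, L_r(ℓ) is nonincreasing in r on (0, 1/2]. -/
/-- `L_r(ℓ) = Pr[h ≤ ℓ] + Pr[h ≥ n - ℓ]` for `h ~ Binomial(n, r)`. -/
noncomputable def Lfun (n ℓ : ℕ) (r : ℝ) : ℝ :=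
  (∑ j ∈ Finset.range (ℓ + 1), (n.choose j : ℝ) * r ^ j * (1 - r) ^ (n - j)) +
    ∑ j ∈ Finset.Icc (n - ℓ) n, (n.choose j : ℝ) * r ^ j * (1 - r) ^ (n - j)


private noncomputable def fterm (n k : ℕ) (r : ℝ) : ℝ :=
  (n : ℝ) * ((n - 1).choose k : ℝ) * r ^ k * (1 - r) ^ (n - 1 - k)

private lemma prod_hasDerivAt (c : ℝ) (a b : ℕ) (r : ℝ) :
    HasDerivAt (fun x : ℝ => c * x ^ a * (1 - x) ^ b)
      (c * ((a : ℝ) * r ^ (a - 1) * (1 - r) ^ b - (b : ℝ) * r ^ a * (1 - r) ^ (b - 1))) r := by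
  have h1 : HasDerivAt (fun x : ℝ => x ^ a) ((a : ℝ) * r ^ (a - 1)) r := hasDerivAt_pow a r
  have h2 : HasDerivAt (fun x : ℝ => (1 - x) ^ b) ((b : ℝ) * (1 - r) ^ (b - 1) * (-1)) r :=
    ((hasDerivAt_id r).const_sub 1).pow b
  have h3 := (h1.mul h2).const_mul c
  have hfe : (fun x : ℝ => c * x ^ a * (1 - x) ^ b) = fun x => c * (x ^ a * (1 - x) ^ b) := by
    funext x; ring
  rw [hfe]
  refine h3.congr_deriv ?_
  ring

private lemma nat1 (n j : ℕ) (hj : 1 ≤ j) : n.choose j * j = n * (n - 1).choose (j - 1) := by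
  cases n with
  | zero => simp [Nat.choose_eq_zero_of_lt hj]
  | succ m =>
    cases j with
    | zero => omega
    | succ k => simpa using (Nat.add_one_mul_choose_eq m k).symm

private lemma nat2 (n j : ℕ) (hj : j ≤ n) : n.choose j * (n - j) = n * (n - 1).choose j := by
  by_cases hje : j = n
  · subst hje
    cases j with
    | zero => simp
    | succ m => simp [Nat.choose_eq_zero_of_lt (Nat.lt_succ_self m)]
  · have h1 : n.choose j = n.choose (n - j) := (Nat.choose_symm hj).symm
    rw [h1, nat1 n (n - j) (by omega)]
    congr 1
    have e : n - j - 1 = (n - 1) - j := by omega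
    rw [e, Nat.choose_symm (by omega : j ≤ n - 1)]

private lemma term_deriv (n j : ℕ) (hj1 : 1 ≤ j) (hjn : j ≤ n) (r : ℝ) :
    HasDerivAt (fun x : ℝ => (n.choose j : ℝ) * x ^ j * (1 - x) ^ (n - j))
      (fterm n (j - 1) r - fterm n j r) r := by
  have h := prod_hasDerivAt (n.choose j : ℝ) j (n - j) r
  convert h using 1
  unfold fterm
  have e1 : n - 1 - (j - 1) = n - j := by omega
  have e2 : n - 1 - j = n - j - 1 := by omega
  have c1 : ((n.choose j : ℕ) : ℝ) * (j : ℝ) = (n : ℝ) * ((n - 1).choose (j - 1) : ℝ) := by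
    exact_mod_cast congrArg (Nat.cast : ℕ → ℝ) (nat1 n j hj1)
  have c2 : ((n.choose j : ℕ) : ℝ) * ((n - j : ℕ) : ℝ) = (n : ℝ) * ((n - 1).choose j : ℝ) := by
    exact_mod_cast congrArg (Nat.cast : ℕ → ℝ) (nat2 n j hjn)
  rw [e1, e2]
  linear_combination (-(r ^ (j - 1) * (1 - r) ^ (n - j))) * c1
    + (r ^ j * (1 - r) ^ (n - j - 1)) * c2

private lemma lower_deriv (n : ℕ) (r : ℝ) :
    ∀ ℓ : ℕ, ℓ < n →
      HasDerivAt
        (fun x : ℝ => ∑ j ∈ Finset.range (ℓ + 1), (n.choose j : ℝ) * x ^ j * (1 - x) ^ (n - j))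
        (-(fterm n ℓ r)) r := by
  intro ℓ
  induction ℓ with
  | zero =>
    intro _
    have h0 := prod_hasDerivAt (n.choose 0 : ℝ) 0 (n - 0) r
    have hfun : (fun x : ℝ => ∑ j ∈ Finset.range (0 + 1),
          (n.choose j : ℝ) * x ^ j * (1 - x) ^ (n - j))
        = fun x : ℝ => (n.choose 0 : ℝ) * x ^ 0 * (1 - x) ^ (n - 0) := by
      funext x
      rw [Finset.sum_range_succ, Finset.sum_range_zero, zero_add]
    rw [hfun]
    convert h0 using 1
    simp only [fterm, Nat.choose_zero_right, Nat.cast_one, pow_zero, Nat.sub_zero,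
      Nat.cast_zero, Nat.zero_sub]
    ring
  | succ k ih =>
    intro h
    have hk := ih (by omega)
    have ht := term_deriv n (k + 1) (by omega) (by omega) r
    have hadd := hk.add ht
    have hfun : (fun x : ℝ => ∑ j ∈ Finset.range (k + 1 + 1),
          (n.choose j : ℝ) * x ^ j * (1 - x) ^ (n - j))
        = fun x : ℝ => (∑ j ∈ Finset.range (k + 1),
            (n.choose j : ℝ) * x ^ j * (1 - x) ^ (n - j))
          + (n.choose (k + 1) : ℝ) * x ^ (k + 1) * (1 - x) ^ (n - (k + 1)) := by
      funext x
      rw [Finset.sum_range_succ]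
    rw [hfun]
    refine hadd.congr_deriv ?_
    simp only [Nat.add_sub_cancel]
    ring

private lemma upper_deriv (n : ℕ) (hn : 1 ≤ n) (r : ℝ) :
    ∀ ℓ : ℕ, ℓ < n →
      HasDerivAt
        (fun x : ℝ => ∑ j ∈ Finset.Icc (n - ℓ) n, (n.choose j : ℝ) * x ^ j * (1 - x) ^ (n - j))
        (fterm n (n - ℓ - 1) r) r := by
  intro ℓ
  induction ℓ with
  | zero =>
    intro _
    have ht := term_deriv n n hn le_rfl r
    simp only [Nat.sub_zero, Finset.Icc_self, Finset.sum_singleton]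
    convert ht using 1
    have hz : (n - 1).choose n = 0 := Nat.choose_eq_zero_of_lt (by omega)
    simp only [fterm, hz, Nat.cast_zero]
    ring
  | succ k ih =>
    intro h
    have hk := ih (by omega)
    have ht := term_deriv n (n - k - 1) (by omega) (by omega) r
    have hins : Finset.Icc (n - (k + 1)) n = insert (n - k - 1) (Finset.Icc (n - k) n) := by
      ext x
      simp only [Finset.mem_Icc, Finset.mem_insert]
      omega
    have hnot : n - k - 1 ∉ Finset.Icc (n - k) n := by
      simp only [Finset.mem_Icc]
      omega
    simp only [hins, Finset.sum_insert hnot]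
    refine (ht.add hk).congr_deriv ?_
    have e : n - (k + 1) - 1 = n - k - 1 - 1 := by omega
    rw [e]
    ring

private lemma Lfun_hasDeriv (n ℓ : ℕ) (hn : 1 ≤ n) (hℓ : ℓ < n) (r : ℝ) :
    HasDerivAt (Lfun n ℓ) (fterm n (n - ℓ - 1) r - fterm n ℓ r) r := by
  have h1 := lower_deriv n r ℓ hℓ
  have h2 := upper_deriv n hn r ℓ hℓ
  have hadd := h1.add h2
  unfold Lfun
  refine hadd.congr_deriv ?_
  ring

private lemma deriv_nonpos (n ℓ : ℕ) (hℓ : 2 * ℓ < n) (x : ℝ) (hx0 : 0 < x) (hx : x ≤ 1 / 2) :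
    fterm n (n - ℓ - 1) x - fterm n ℓ x ≤ 0 := by
  have hc : (n - 1).choose (n - ℓ - 1) = (n - 1).choose ℓ := by
    have e : n - ℓ - 1 = (n - 1) - ℓ := by omega
    rw [e, Nat.choose_symm (by omega)]
  have he : n - 1 - (n - ℓ - 1) = ℓ := by omega
  unfold fterm
  rw [hc, he]
  have key : x ^ (n - ℓ - 1) * (1 - x) ^ ℓ ≤ x ^ ℓ * (1 - x) ^ (n - 1 - ℓ) := by
    have e : n - ℓ - 1 = ℓ + (n - 1 - 2 * ℓ) := by omega
    have e' : n - 1 - ℓ = ℓ + (n - 1 - 2 * ℓ) := by omega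
    rw [e, e', pow_add, pow_add]
    have h1 : x ^ (n - 1 - 2 * ℓ) ≤ (1 - x) ^ (n - 1 - 2 * ℓ) :=
      pow_le_pow_left₀ hx0.le (by linarith) _
    have h2 : (0:ℝ) ≤ x ^ ℓ := pow_nonneg hx0.le ℓ
    have h3 : (0:ℝ) ≤ (1 - x) ^ ℓ := pow_nonneg (by linarith) ℓ
    calc x ^ ℓ * x ^ (n - 1 - 2 * ℓ) * (1 - x) ^ ℓ
        ≤ x ^ ℓ * (1 - x) ^ (n - 1 - 2 * ℓ) * (1 - x) ^ ℓ := by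
          apply mul_le_mul_of_nonneg_right (mul_le_mul_of_nonneg_left h1 h2) h3
      _ = x ^ ℓ * ((1 - x) ^ ℓ * (1 - x) ^ (n - 1 - 2 * ℓ)) := by ring
  have hC : (0:ℝ) ≤ (n : ℝ) * ((n - 1).choose ℓ : ℝ) := by positivity
  have := mul_le_mul_of_nonneg_left key hC
  nlinarith [this]

/-- for `0 ≤ ℓ < n/2`, the function `r ↦ L_r(ℓ)` is nonincreasing on `(0, 1/2]`. -/
theorem stmt_5 (n ℓ : ℕ) (hn : 1 ≤ n) (hℓ : 2 * ℓ < n)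
    (r s : ℝ) (hr : 0 < r) (hrs : r ≤ s) (hs : s ≤ 1 / 2) :
    Lfun n ℓ s ≤ Lfun n ℓ r := by
  have hℓn : ℓ < n := by omega
  have hanti : AntitoneOn (Lfun n ℓ) (Set.Icc r s) := by
    apply antitoneOn_of_deriv_nonpos (convex_Icc r s)
    · intro x hx
      exact (Lfun_hasDeriv n ℓ hn hℓn x).differentiableAt.continuousAt.continuousWithinAt
    · intro x hx
      exact (Lfun_hasDeriv n ℓ hn hℓn x).differentiableAt.differentiableWithinAt
    · intro x hx
      rw [interior_Icc] at hx
      rw [(Lfun_hasDeriv n ℓ hn hℓn x).deriv]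
      exact deriv_nonpos n ℓ hℓ x (lt_trans hr hx.1) (le_of_lt (lt_of_lt_of_le hx.2 hs))
  exact hanti (Set.left_mem_Icc.mpr hrs) (Set.right_mem_Icc.mpr hrs) hrs
end

section
/- Let δ_1, δ_2, ... be a sequence of reals with δ_1 = 1 and satisfying δ_m ≤ (1/√(d m))·√(d + δ_1 + ... + δ_m) for all m ≥ 2, where d ≥ 1 is an integer. Then δ_m ≤ 1/d + 1/√m for all m ≥ 1, and consequently δ_1 + ... + δ_n ≤ n/d + 2√n. -/
lemma sum_inv_sqrt_le (m : ℕ) :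
    ∑ i ∈ Finset.Icc 1 m, (1 / Real.sqrt i) ≤ 2 * Real.sqrt m := by
  induction m with
  | zero => simp
  | succ n ih =>
    rw [Finset.sum_Icc_succ_top (by omega : 1 ≤ n + 1)]
    have hs : Real.sqrt n ^ 2 = (n : ℝ) := Real.sq_sqrt (by positivity)
    have ht : Real.sqrt ((n : ℕ) + 1 : ℕ) ^ 2 = (n : ℝ) + 1 := by
      rw [Real.sq_sqrt (by positivity)]; push_cast; ring
    have hs0 : 0 ≤ Real.sqrt n := Real.sqrt_nonneg _
    have ht0 : 0 < Real.sqrt ((n : ℕ) + 1 : ℕ) := by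
      apply Real.sqrt_pos.mpr; push_cast; positivity
    have key : 1 / Real.sqrt ((n : ℕ) + 1 : ℕ) ≤
        2 * Real.sqrt ((n : ℕ) + 1 : ℕ) - 2 * Real.sqrt n := by
      rw [div_le_iff₀ ht0]
      nlinarith [sq_nonneg (Real.sqrt ((n : ℕ) + 1 : ℕ) - Real.sqrt n)]
    linarith

lemma two_sqrt_pred_le (m : ℕ) (hm : 2 ≤ m) :
    2 * Real.sqrt (m - 1 : ℕ) ≤ 2 * Real.sqrt m - 1 / Real.sqrt m := by
  have h1 : ((m - 1 : ℕ) : ℝ) = (m : ℝ) - 1 := by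
    have : (1 : ℕ) ≤ m := by omega
    push_cast [this]; ring
  have hr : Real.sqrt (m - 1 : ℕ) ^ 2 = (m : ℝ) - 1 := by
    have hm2R : (2 : ℝ) ≤ m := by exact_mod_cast hm
    rw [Real.sq_sqrt (by rw [h1]; linarith), h1]
  have hs : Real.sqrt m ^ 2 = (m : ℝ) := Real.sq_sqrt (by positivity)
  have hs0 : 0 < Real.sqrt m := Real.sqrt_pos.mpr (by positivity)
  have hr0 : 0 ≤ Real.sqrt (m - 1 : ℕ) := Real.sqrt_nonneg _
  have key : 1 / Real.sqrt m ≤ 2 * Real.sqrt m - 2 * Real.sqrt (m - 1 : ℕ) := by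
    rw [div_le_iff₀ hs0]
    nlinarith [sq_nonneg (Real.sqrt m - Real.sqrt (m - 1 : ℕ))]
  linarith

set_option maxHeartbeats 1000000 in
lemma pointwise_bound (d : ℕ) (hd : 1 ≤ d) (δ : ℕ → ℝ) (h1 : δ 1 = 1)
    (hrec : ∀ m : ℕ, 2 ≤ m →
      δ m ≤ (1 / Real.sqrt (d * m)) * Real.sqrt (d + ∑ i ∈ Finset.Icc 1 m, δ i)) :
    ∀ m : ℕ, 1 ≤ m → δ m ≤ 1 / d + 1 / Real.sqrt m := by
  intro m
  induction m using Nat.strong_induction_on with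
  | _ m ih =>
    intro hm
    have hd0 : (0 : ℝ) < d := by exact_mod_cast hd
    rcases eq_or_lt_of_le hm with h | h
    · subst h
      simp only [h1, Nat.cast_one, Real.sqrt_one]
      have : (0 : ℝ) < 1 / d := by positivity
      linarith
    -- m ≥ 2
    have hm2 : 2 ≤ m := h
    have hm2R : (2 : ℝ) ≤ m := by exact_mod_cast hm2
    set s := Real.sqrt m with hs_def
    have hs2 : s ^ 2 = (m : ℝ) := Real.sq_sqrt (by positivity)
    have hs0 : 0 < s := Real.sqrt_pos.mpr (by positivity)
    set S := ∑ i ∈ Finset.Icc 1 (m - 1), δ i with hS_def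
    have hS : S ≤ ((m : ℝ) - 1) / d + 2 * Real.sqrt (m - 1 : ℕ) := by
      have hstep : S ≤ ∑ i ∈ Finset.Icc 1 (m - 1), (1 / (d : ℝ) + 1 / Real.sqrt i) := by
        apply Finset.sum_le_sum
        intro i hi
        have hi' := Finset.mem_Icc.mp hi
        exact ih i (by omega) hi'.1
      have hsplit : ∑ i ∈ Finset.Icc 1 (m - 1), (1 / (d : ℝ) + 1 / Real.sqrt i)
          = ((m : ℝ) - 1) * (1 / d) + ∑ i ∈ Finset.Icc 1 (m - 1), 1 / Real.sqrt i := by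
        rw [Finset.sum_add_distrib, Finset.sum_const, Nat.card_Icc]
        have : (m - 1 + 1 - 1 : ℕ) = m - 1 := by omega
        rw [this]
        have h1' : ((m - 1 : ℕ) : ℝ) = (m : ℝ) - 1 := by
          have : (1 : ℕ) ≤ m := by omega
          push_cast [this]; ring
        rw [nsmul_eq_mul, h1']
      have := sum_inv_sqrt_le (m - 1)
      rw [hsplit] at hstep
      have := sum_inv_sqrt_le (m - 1)
      calc S ≤ ((m : ℝ) - 1) * (1 / d) + ∑ i ∈ Finset.Icc 1 (m - 1), 1 / Real.sqrt i := hstep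
        _ ≤ ((m : ℝ) - 1) / d + 2 * Real.sqrt (m - 1 : ℕ) := by
            rw [mul_one_div]; linarith
    have hS' : S ≤ ((m : ℝ) - 1) / d + 2 * s - 1 / s := by
      have := two_sqrt_pred_le m hm2
      rw [← hs_def] at this
      linarith
    -- the recurrence at m, with the sum split off
    have hsum : ∑ i ∈ Finset.Icc 1 m, δ i = S + δ m := by
      have hm1 : m - 1 + 1 = m := by omega
      rw [← hm1, Finset.sum_Icc_succ_top (by omega : 1 ≤ m - 1 + 1), hm1, hS_def]
    have hx := hrec m hm2
    rw [hsum] at hx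
    set x := δ m with hx_def
    set t := (1 / (d : ℝ) + 1 / s) with ht_def
    have ht0 : 0 < t := by positivity
    clear_value s S x t
    by_contra hcon
    push_neg at hcon
    have hcon' : t < x := hcon
    have hx0 : 0 < x := lt_trans ht0 hcon'
    have hdm0 : (0 : ℝ) < (d : ℝ) * m := by positivity
    have hsdm : 0 < Real.sqrt ((d : ℝ) * m) := Real.sqrt_pos.mpr hdm0
    set R := (d : ℝ) + (S + x) with hR_def
    clear_value R
    by_cases hR : 0 ≤ R
    · -- square the recurrence
      have h2 : x * Real.sqrt ((d : ℝ) * m) ≤ Real.sqrt R := by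
        rw [one_div, inv_mul_eq_div, le_div_iff₀ hsdm] at hx
        exact hx
      have h3 : x ^ 2 * ((d : ℝ) * m) ≤ R := by
        have h2' := mul_self_le_mul_self (mul_nonneg hx0.le (Real.sqrt_nonneg _)) h2
        have e1 : Real.sqrt ((d : ℝ) * m) * Real.sqrt ((d : ℝ) * m) = (d : ℝ) * m :=
          Real.mul_self_sqrt hdm0.le
        have e2 : Real.sqrt R * Real.sqrt R = R := Real.mul_self_sqrt hR
        nlinarith [h2']
      have e : (d : ℝ) * m * t ^ 2 - t = (d : ℝ) + ((m : ℝ) - 1) / d + 2 * s - 1 / s := by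
        rw [ht_def, ← hs2]
        field_simp
        ring
      have h3' : x ^ 2 * ((d : ℝ) * m) ≤ (d : ℝ) + (S + x) := by
        rw [← hR_def]; exact h3
      have key : (d : ℝ) * m * x ^ 2 - x ≤ (d : ℝ) * m * t ^ 2 - t := by
        rw [e]
        nlinarith [h3', hS']
      have hDt : 1 ≤ (d : ℝ) * t := by
        have heq : (d : ℝ) * t = 1 + (d : ℝ) / s := by
          rw [ht_def]; field_simp
        rw [heq]
        have : 0 ≤ (d : ℝ) / s := by positivity
        linarith
      have hmt : 2 ≤ (d : ℝ) * m * t := by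
        have h' : (d : ℝ) * m * t = m * ((d : ℝ) * t) := by ring
        rw [h']
        calc (2 : ℝ) ≤ m * 1 := by linarith
          _ ≤ m * ((d : ℝ) * t) := by
              apply mul_le_mul_of_nonneg_left hDt (by positivity)
      have hmx : 0 < (d : ℝ) * m * x := mul_pos hdm0 hx0
      have hfac : 0 < (x - t) * ((d : ℝ) * m * (x + t) - 1) := by
        apply mul_pos (by linarith)
        have hdist : (d : ℝ) * m * (x + t) = (d : ℝ) * m * x + (d : ℝ) * m * t := by
          ring
        rw [hdist]
        linarith
      have hexp : (x - t) * ((d : ℝ) * m * (x + t) - 1)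
          = ((d : ℝ) * m * x ^ 2 - x) - ((d : ℝ) * m * t ^ 2 - t) := by ring
      linarith [hfac, hexp.le, key]
    · push_neg at hR
      have : Real.sqrt R = 0 := Real.sqrt_eq_zero_of_nonpos hR.le
      rw [this, mul_zero] at hx
      linarith

/-- recurrence analysis for the Schur–Weyl first-row bound. -/
theorem stmt_8 (d : ℕ) (hd : 1 ≤ d) (δ : ℕ → ℝ) (h1 : δ 1 = 1)
    (hrec : ∀ m : ℕ, 2 ≤ m →
      δ m ≤ (1 / Real.sqrt (d * m)) * Real.sqrt (d + ∑ i ∈ Finset.Icc 1 m, δ i)) :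
    (∀ m : ℕ, 1 ≤ m → δ m ≤ 1 / d + 1 / Real.sqrt m) ∧
    ∀ n : ℕ, ∑ m ∈ Finset.Icc 1 n, δ m ≤ n / d + 2 * Real.sqrt n := by
  have hpt := pointwise_bound d hd δ h1 hrec
  refine ⟨hpt, fun n => ?_⟩
  have hstep : ∑ m ∈ Finset.Icc 1 n, δ m ≤ ∑ i ∈ Finset.Icc 1 n, (1 / (d : ℝ) + 1 / Real.sqrt i) := by
    apply Finset.sum_le_sum
    intro i hi
    exact hpt i (Finset.mem_Icc.mp hi).1
  have hsplit : ∑ i ∈ Finset.Icc 1 n, (1 / (d : ℝ) + 1 / Real.sqrt i)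
      = (n : ℝ) * (1 / d) + ∑ i ∈ Finset.Icc 1 n, 1 / Real.sqrt i := by
    rw [Finset.sum_add_distrib, Finset.sum_const, Nat.card_Icc]
    have : (n + 1 - 1 : ℕ) = n := by omega
    rw [this, nsmul_eq_mul]
  have := sum_inv_sqrt_le n
  rw [hsplit] at hstep
  rw [mul_one_div] at hstep
  linarith
end

section
/- Let 0 ≤ p, q ≤ 1 with |q - 1/2| ≥ |p - 1/2|. For each n there is a coupling (w, x) of the p-biased product distribution on {1,2}^n and the q-biased product distribution on {1,2}^n such that for all 1 ≤ i ≤ j ≤ n, the longest nondecreasing subsequence of x[i..j] is at least as long as that of w[i..j], almost surely. -/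
/-- Length of the longest nondecreasing subsequence of the subword of `w` with indices in `I`. -/
noncomputable def lisOn {n : ℕ} (w : Fin n → Fin 2) (I : Finset (Fin n)) : ℕ :=
  sSup {m | ∃ S : Finset (Fin n), S ⊆ I ∧
    (∀ i ∈ S, ∀ j ∈ S, i ≤ j → w i ≤ w j) ∧ S.card = m}

namespace Stmt13

def lisSet {n : ℕ} (w : Fin n → Fin 2) (I : Finset (Fin n)) : Set ℕ :=
  {m | ∃ S : Finset (Fin n), S ⊆ I ∧
    (∀ i ∈ S, ∀ j ∈ S, i ≤ j → w i ≤ w j) ∧ S.card = m}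

lemma lisOn_eq {n : ℕ} (w : Fin n → Fin 2) (I : Finset (Fin n)) :
    lisOn w I = sSup (lisSet w I) := rfl

lemma lisSet_nonempty {n : ℕ} (w : Fin n → Fin 2) (I : Finset (Fin n)) :
    (lisSet w I).Nonempty :=
  ⟨0, ∅, by simp⟩

lemma lisSet_bdd {n : ℕ} (w : Fin n → Fin 2) (I : Finset (Fin n)) :
    BddAbove (lisSet w I) := by
  refine ⟨I.card, ?_⟩
  rintro m ⟨S, hS, -, rfl⟩
  exact Finset.card_le_card hS

def cnt {n : ℕ} (x : Fin n → Fin 2) (v : Fin 2) (lo hi : ℕ) : ℕ :=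
  (Finset.univ.filter fun u : Fin n => lo ≤ (u : ℕ) ∧ (u : ℕ) < hi ∧ x u = v).card

lemma cnt_mono {n : ℕ} (x y : Fin n → Fin 2) (v v' : Fin 2) (lo hi : ℕ)
    (h : ∀ u : Fin n, lo ≤ (u : ℕ) → (u : ℕ) < hi → x u = v → y u = v') :
    cnt x v lo hi ≤ cnt y v' lo hi := by
  apply Finset.card_le_card
  intro u hu
  simp only [Finset.mem_filter, Finset.mem_univ, true_and] at hu ⊢
  exact ⟨hu.1, hu.2.1, h u hu.1 hu.2.1 hu.2.2⟩

lemma cnt_split {n : ℕ} (x : Fin n → Fin 2) (v : Fin 2) {lo mid hi : ℕ}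
    (h1 : lo ≤ mid) (h2 : mid ≤ hi) :
    cnt x v lo hi = cnt x v lo mid + cnt x v mid hi := by
  unfold cnt
  rw [← Finset.card_union_of_disjoint]
  · congr 1
    ext u
    simp only [Finset.mem_filter, Finset.mem_univ, true_and, Finset.mem_union]
    constructor
    · rintro ⟨h3, h4, h5⟩
      by_cases h : (u : ℕ) < mid
      · exact Or.inl ⟨h3, h, h5⟩
      · exact Or.inr ⟨by omega, h4, h5⟩
    · rintro (⟨h3, h4, h5⟩ | ⟨h3, h4, h5⟩) <;> exact ⟨by omega, by omega, h5⟩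
  · rw [Finset.disjoint_filter]
    rintro u - ⟨-, h4, -⟩ ⟨h5, -, -⟩
    omega

lemma cnt_eq_zero {n : ℕ} (x : Fin n → Fin 2) (v : Fin 2) {lo hi : ℕ} (h : hi ≤ lo) :
    cnt x v lo hi = 0 := by
  unfold cnt
  rw [Finset.card_eq_zero]
  ext u
  simp only [Finset.mem_filter, Finset.mem_univ, true_and, Finset.notMem_empty, iff_false]
  rintro ⟨h1, h2, -⟩; omega

lemma cnt_succ {n : ℕ} (x : Fin n → Fin 2) (v : Fin 2) {lo : ℕ} (s : Fin n)
    (h : lo ≤ (s : ℕ)) :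
    cnt x v lo ((s : ℕ) + 1) = cnt x v lo s + (if x s = v then 1 else 0) := by
  rw [cnt_split x v h (Nat.le_succ _)]
  congr 1
  unfold cnt
  by_cases hv : x s = v
  · rw [if_pos hv]
    rw [Finset.card_eq_one]
    refine ⟨s, ?_⟩
    ext u
    simp only [Finset.mem_filter, Finset.mem_univ, true_and, Finset.mem_singleton]
    constructor
    · rintro ⟨h1, h2, h3⟩
      exact Fin.ext (by omega)
    · rintro rfl
      exact ⟨le_refl _, by omega, hv⟩
  · rw [if_neg hv]
    rw [Finset.card_eq_zero]
    ext u
    simp only [Finset.mem_filter, Finset.mem_univ, true_and, Finset.notMem_empty, iff_false]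
    rintro ⟨h1, h2, h3⟩
    have : u = s := Fin.ext (by omega)
    exact hv (this ▸ h3)

/-- `s` is a strict record up-step of `x`. -/
def RecN {n : ℕ} (x : Fin n → Fin 2) (s : Fin n) : Prop :=
  x s = 0 ∧ ∀ s' : ℕ, cnt x 1 s' s ≤ cnt x 0 s' s

/-- The support relation: `w` is `x` with some strict-record up-steps flipped to 2. -/
def Rel {n : ℕ} (w x : Fin n → Fin 2) : Prop :=
  ∀ s, (w s = 0 → x s = 0) ∧ (w s = 1 → x s = 0 → RecN x s)

lemma fin2_cases (a : Fin 2) : a = 0 ∨ a = 1 := by omega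

end Stmt13

namespace Stmt13

/-- Record count lemma: if `F` is a nonempty set of records all `≥ k`, with max `tm`,
then `cnt x 1 k (tm+1) + F.card ≤ cnt x 0 k (tm+1)`. -/
lemma record_count {n : ℕ} (x : Fin n → Fin 2) (k : ℕ) :
    ∀ (m : ℕ) (F : Finset (Fin n)) (hne : F.Nonempty), F.card = m →
    (∀ t ∈ F, RecN x t) → (∀ t ∈ F, k ≤ (t : ℕ)) →
    cnt x 1 k ((F.max' hne : ℕ) + 1) + F.card ≤ cnt x 0 k ((F.max' hne : ℕ) + 1) := by
  intro m
  induction m with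
  | zero => intro F hne hcard; simp [Finset.card_eq_zero] at hcard; subst hcard
            exact absurd hne (by simp)
  | succ m ih =>
    intro F hne hcard hrec hk
    set tm := F.max' hne with htm
    have htmF : tm ∈ F := F.max'_mem hne
    have hktm : k ≤ (tm : ℕ) := hk tm htmF
    have hrectm := hrec tm htmF
    rcases Nat.eq_zero_or_pos m with hm | hm
    · -- singleton case
      have h1 : cnt x 1 k tm ≤ cnt x 0 k tm := hrectm.2 k
      have h2 := cnt_succ x 1 (lo := k) tm hktm
      have h3 := cnt_succ x 0 (lo := k) tm hktm
      rw [h2, h3, hrectm.1]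
      simp only [hcard, hm]
      norm_num
      omega
    · -- erase the max
      set F' := F.erase tm with hF'
      have hne' : F'.Nonempty := by
        rw [← Finset.card_pos, Finset.card_erase_of_mem htmF, hcard]; omega
      have hcard' : F'.card = m := by
        rw [hF', Finset.card_erase_of_mem htmF, hcard]
        omega
      set tm' := F'.max' hne' with htm'
      have htm'F : tm' ∈ F := Finset.mem_of_mem_erase (F'.max'_mem hne')
      have htm'lt : (tm' : ℕ) < (tm : ℕ) := by
        have h1 : tm' ≤ tm := F.le_max' tm' htm'F
        have h2 : tm' ≠ tm := Finset.ne_of_mem_erase (F'.max'_mem hne')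
        have := Fin.lt_iff_val_lt_val.mp (lt_of_le_of_ne h1 h2)
        exact this
      have IH := ih F' hne' hcard' (fun t ht => hrec t (Finset.mem_of_mem_erase ht))
        (fun t ht => hk t (Finset.mem_of_mem_erase ht))
      rw [← htm'] at IH
      have hktm' : k ≤ (tm' : ℕ) := hk tm' htm'F
      -- middle segment
      have hmid : cnt x 1 ((tm' : ℕ) + 1) tm ≤ cnt x 0 ((tm' : ℕ) + 1) tm :=
        hrectm.2 ((tm' : ℕ) + 1)
      have e1 : cnt x 1 k ((tm : ℕ) + 1)
          = cnt x 1 k ((tm' : ℕ) + 1) + cnt x 1 ((tm' : ℕ) + 1) tm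
            + (if x tm = 1 then 1 else 0) := by
        rw [cnt_succ x 1 (lo := k) tm hktm, cnt_split x 1 (mid := (tm' : ℕ) + 1)
          (by omega) (by omega)]
      have e0 : cnt x 0 k ((tm : ℕ) + 1)
          = cnt x 0 k ((tm' : ℕ) + 1) + cnt x 0 ((tm' : ℕ) + 1) tm
            + (if x tm = 0 then 1 else 0) := by
        rw [cnt_succ x 0 (lo := k) tm hktm, cnt_split x 0 (mid := (tm' : ℕ) + 1)
          (by omega) (by omega)]
      have hx0 : (if x tm = 1 then 1 else 0) = 0 := by rw [hrectm.1]; decide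
      have hx1 : (if x tm = 0 then 1 else 0) = 1 := by rw [hrectm.1]; decide
      rw [hcard'] at IH
      rw [e1, e0, hx0, hx1, hcard]
      omega

/-- Pointwise flip count: `cnt w 1 = cnt x 1 + #flips` on a range. -/
lemma cnt_flip_split {n : ℕ} {w x : Fin n → Fin 2} (hrel : Rel w x) (lo hi : ℕ) :
    cnt w 1 lo hi = cnt x 1 lo hi
      + (Finset.univ.filter fun u : Fin n =>
          lo ≤ (u : ℕ) ∧ (u : ℕ) < hi ∧ w u = 1 ∧ x u = 0).card := by
  unfold cnt
  rw [← Finset.card_union_of_disjoint]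
  · congr 1
    ext u
    simp only [Finset.mem_filter, Finset.mem_univ, true_and, Finset.mem_union]
    constructor
    · rintro ⟨h1, h2, h3⟩
      rcases fin2_cases (x u) with hx | hx
      · exact Or.inr ⟨h1, h2, h3, hx⟩
      · exact Or.inl ⟨h1, h2, hx⟩
    · rintro (⟨h1, h2, h3⟩ | ⟨h1, h2, h3, h4⟩)
      · refine ⟨h1, h2, ?_⟩
        rcases fin2_cases (w u) with hw | hw
        · have := (hrel u).1 hw; rw [this] at h3; exact absurd h3 (by decide)
        · exact hw
      · exact ⟨h1, h2, h3⟩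
  · rw [Finset.disjoint_filter]
    rintro u - ⟨-, -, h3⟩ ⟨-, -, -, h4⟩
    rw [h4] at h3; exact absurd h3 (by decide)

end Stmt13

namespace Stmt13

def phi {n : ℕ} (u : Fin n → Fin 2) (a k b : ℕ) : ℕ :=
  cnt u 0 a k + cnt u 1 k (b + 1)

/-- Every split value is achieved by a chain inside `Icc i j`. -/
lemma phi_mem {n : ℕ} (x : Fin n → Fin 2) (i j : Fin n) (k : ℕ)
    (hik : (i : ℕ) ≤ k) (hkj : k ≤ (j : ℕ) + 1) :
    phi x i k j ∈ lisSet x (Finset.Icc i j) := by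
  classical
  set P0 := Finset.univ.filter fun u : Fin n =>
    (i : ℕ) ≤ (u : ℕ) ∧ (u : ℕ) < k ∧ x u = 0 with hP0
  set P1 := Finset.univ.filter fun u : Fin n =>
    k ≤ (u : ℕ) ∧ (u : ℕ) < (j : ℕ) + 1 ∧ x u = 1 with hP1
  refine ⟨P0 ∪ P1, ?_, ?_, ?_⟩
  · intro u hu
    rw [Finset.mem_union, hP0, hP1] at hu
    simp only [Finset.mem_filter, Finset.mem_univ, true_and] at hu
    rw [Finset.mem_Icc, Fin.le_def, Fin.le_def]
    rcases hu with ⟨h1, h2, -⟩ | ⟨h1, h2, -⟩ <;> omega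
  · intro a ha b hb hab
    rw [Finset.mem_union, hP0, hP1] at ha hb
    simp only [Finset.mem_filter, Finset.mem_univ, true_and] at ha hb
    rw [Fin.le_def] at hab
    rcases ha with ⟨-, ha2, ha3⟩ | ⟨ha1, -, ha3⟩ <;>
      rcases hb with ⟨-, hb2, hb3⟩ | ⟨hb1, -, hb3⟩
    · rw [ha3, hb3]
    · rw [ha3, hb3]; decide
    · exfalso; omega
    · rw [ha3, hb3]
  · rw [Finset.card_union_of_disjoint, hP0, hP1]
    · rfl
    · rw [hP0, hP1, Finset.disjoint_filter]
      rintro u - ⟨-, h2, -⟩ ⟨h3, -, -⟩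
      omega

/-- The heart: for every split of `w` there is a better split of `x`. -/
lemma key_split {n : ℕ} {w x : Fin n → Fin 2} (hrel : Rel w x) (i j : Fin n)
    (k : ℕ) (hik : (i : ℕ) ≤ k) (hkj : k ≤ (j : ℕ) + 1) :
    ∃ k', (i : ℕ) ≤ k' ∧ k' ≤ (j : ℕ) + 1 ∧ phi w i k j ≤ phi x i k' j := by
  classical
  set TF := Finset.univ.filter (fun u : Fin n =>
    k ≤ (u : ℕ) ∧ (u : ℕ) < (j : ℕ) + 1 ∧ w u = 1 ∧ x u = 0) with hTF
  by_cases hne : TF.Nonempty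
  · -- flips exist in the ones-region
    set tm := TF.max' hne with htm
    have htmTF : tm ∈ TF := TF.max'_mem hne
    have htmP : k ≤ (tm : ℕ) ∧ (tm : ℕ) < (j : ℕ) + 1 ∧ w tm = 1 ∧ x tm = 0 := by
      have := htmTF; rw [hTF] at this
      simpa using this
    refine ⟨(tm : ℕ) + 1, by omega, by omega, ?_⟩
    unfold phi
    -- (a) no flips in [tm+1, j+1)
    have ha : cnt w 1 ((tm : ℕ) + 1) ((j : ℕ) + 1) ≤ cnt x 1 ((tm : ℕ) + 1) ((j : ℕ) + 1) := by
      apply cnt_mono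
      intro u h1 h2 h3
      rcases fin2_cases (x u) with hx | hx
      · exfalso
        have huTF : u ∈ TF := by
          rw [hTF]; simp only [Finset.mem_filter, Finset.mem_univ, true_and]
          exact ⟨by omega, h2, h3, hx⟩
        have := TF.le_max' u huTF
        rw [← htm] at this
        rw [Fin.le_def] at this
        omega
      · exact hx
    -- (b) w zeros are x zeros
    have hb : cnt w 0 i k ≤ cnt x 0 i k :=
      cnt_mono _ _ _ _ _ _ (fun u _ _ h => (hrel u).1 h)
    -- flips in [k, tm+1) are exactly TF
    have hTFcard : (Finset.univ.filter fun u : Fin n =>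
        k ≤ (u : ℕ) ∧ (u : ℕ) < (tm : ℕ) + 1 ∧ w u = 1 ∧ x u = 0).card = TF.card := by
      congr 1
      ext u
      rw [hTF]
      simp only [Finset.mem_filter, Finset.mem_univ, true_and]
      constructor
      · rintro ⟨h1, h2, h3, h4⟩
        exact ⟨h1, by omega, h3, h4⟩
      · rintro ⟨h1, h2, h3, h4⟩
        have : u ∈ TF := by
          rw [hTF]; simp only [Finset.mem_filter, Finset.mem_univ, true_and]
          exact ⟨h1, h2, h3, h4⟩
        have := TF.le_max' u this
        rw [← htm, Fin.le_def] at this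
        exact ⟨h1, by omega, h3, h4⟩
    -- cnt w 1 on [k, tm+1) = cnt x 1 + TF.card
    have hc : cnt w 1 k ((tm : ℕ) + 1) = cnt x 1 k ((tm : ℕ) + 1) + TF.card := by
      rw [cnt_flip_split hrel k ((tm : ℕ) + 1), hTFcard]
    -- record count: cnt x 1 k (tm+1) + TF.card ≤ cnt x 0 k (tm+1)
    have hd : cnt x 1 k ((tm : ℕ) + 1) + TF.card ≤ cnt x 0 k ((tm : ℕ) + 1) := by
      have := record_count x k TF.card TF hne rfl ?_ ?_
      · rw [← htm] at this; exact this
      · intro t ht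
        rw [hTF] at ht
        simp only [Finset.mem_filter, Finset.mem_univ, true_and] at ht
        exact (hrel t).2 ht.2.2.1 ht.2.2.2
      · intro t ht
        rw [hTF] at ht
        simp only [Finset.mem_filter, Finset.mem_univ, true_and] at ht
        exact ht.1
    -- assemble
    have e1 : cnt w 1 k ((j : ℕ) + 1)
        = cnt w 1 k ((tm : ℕ) + 1) + cnt w 1 ((tm : ℕ) + 1) ((j : ℕ) + 1) :=
      cnt_split w 1 (by omega) (by omega)
    have e2 : cnt x 0 i ((tm : ℕ) + 1) = cnt x 0 i k + cnt x 0 k ((tm : ℕ) + 1) :=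
      cnt_split x 0 hik (by omega)
    omega
  · -- no flips: k' = k works
    refine ⟨k, hik, hkj, ?_⟩
    unfold phi
    have hb : cnt w 0 i k ≤ cnt x 0 i k :=
      cnt_mono _ _ _ _ _ _ (fun u _ _ h => (hrel u).1 h)
    have ha : cnt w 1 k ((j : ℕ) + 1) ≤ cnt x 1 k ((j : ℕ) + 1) := by
      apply cnt_mono
      intro u h1 h2 h3
      rcases fin2_cases (x u) with hx | hx
      · exfalso
        apply hne
        refine ⟨u, ?_⟩
        rw [hTF]
        simp only [Finset.mem_filter, Finset.mem_univ, true_and]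
        exact ⟨h1, h2, h3, hx⟩
      · exact hx
    omega

/-- Any chain of `w` is bounded by some split value of `w`. -/
lemma chain_le_phi {n : ℕ} (w : Fin n → Fin 2) (i j : Fin n) (hij : i ≤ j)
    (S : Finset (Fin n)) (hS : S ⊆ Finset.Icc i j)
    (hchain : ∀ a ∈ S, ∀ b ∈ S, a ≤ b → w a ≤ w b) :
    ∃ k, (i : ℕ) ≤ k ∧ k ≤ (j : ℕ) + 1 ∧ S.card ≤ phi w i k j := by
  classical
  set S1 := S.filter (fun t => w t = 1) with hS1
  by_cases hne : S1.Nonempty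
  case neg =>
    -- no ones: k = j+1
    refine ⟨(j : ℕ) + 1, by have := Fin.le_def.mp hij; omega, le_refl _, ?_⟩
    unfold phi
    have : S.card ≤ cnt w 0 i ((j : ℕ) + 1) := by
      apply Finset.card_le_card
      intro u hu
      have huI := hS hu
      rw [Finset.mem_Icc] at huI
      simp only [cnt, Finset.mem_filter, Finset.mem_univ, true_and]
      refine ⟨Fin.le_def.mp huI.1, by have := Fin.le_def.mp huI.2; omega, ?_⟩
      rcases fin2_cases (w u) with h | h
      · exact h
      · exfalso
        apply hne
        refine ⟨u, ?_⟩
        rw [hS1]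
        exact Finset.mem_filter.mpr ⟨hu, h⟩
    omega
  case pos =>
    set t0 := S1.min' hne with ht0
    have ht0S1 : t0 ∈ S1 := S1.min'_mem hne
    have ht0m : t0 ∈ S ∧ w t0 = 1 := by
      have := ht0S1
      rw [hS1, Finset.mem_filter] at this
      exact this
    have ht0S : t0 ∈ S := ht0m.1
    have ht0w : w t0 = 1 := ht0m.2
    have ht0I := hS ht0S
    rw [Finset.mem_Icc] at ht0I
    refine ⟨(t0 : ℕ), Fin.le_def.mp ht0I.1, by have := Fin.le_def.mp ht0I.2; omega, ?_⟩
    unfold phi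
    -- S splits into zeros (< t0) and ones (≥ t0)
    have hsub : S ⊆ (Finset.univ.filter fun u : Fin n =>
        (i : ℕ) ≤ (u : ℕ) ∧ (u : ℕ) < (t0 : ℕ) ∧ w u = 0)
      ∪ (Finset.univ.filter fun u : Fin n =>
        (t0 : ℕ) ≤ (u : ℕ) ∧ (u : ℕ) < (j : ℕ) + 1 ∧ w u = 1) := by
      intro u hu
      have huI := hS hu
      rw [Finset.mem_Icc] at huI
      have h1 := Fin.le_def.mp huI.1
      have h2 := Fin.le_def.mp huI.2
      rw [Finset.mem_union]
      simp only [Finset.mem_filter, Finset.mem_univ, true_and]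
      rcases fin2_cases (w u) with h | h
      · left
        refine ⟨h1, ?_, h⟩
        by_contra hc
        push_neg at hc
        have : t0 ≤ u := Fin.le_def.mpr hc
        have := hchain t0 ht0S u hu this
        rw [ht0w, h] at this
        exact absurd this (by decide)
      · right
        refine ⟨?_, by omega, h⟩
        have hu1 : u ∈ S1 := by
          rw [hS1]
          exact Finset.mem_filter.mpr ⟨hu, h⟩
        exact Fin.le_def.mp (S1.min'_le u hu1)
    calc S.card ≤ _ := Finset.card_le_card hsub
    _ ≤ _ := Finset.card_union_le _ _

/-- Main combinatorial lemma. -/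
lemma rel_lisOn {n : ℕ} {w x : Fin n → Fin 2} (hrel : Rel w x) (i j : Fin n)
    (hij : i ≤ j) : lisOn w (Finset.Icc i j) ≤ lisOn x (Finset.Icc i j) := by
  rw [lisOn_eq, lisOn_eq]
  apply csSup_le (lisSet_nonempty w _)
  rintro m ⟨S, hS, hchain, rfl⟩
  obtain ⟨k, hk1, hk2, hk3⟩ := chain_le_phi w i j hij S hS hchain
  obtain ⟨k', hk'1, hk'2, hk'3⟩ := key_split hrel i j k hk1 hk2
  calc S.card ≤ phi w i k j := hk3
  _ ≤ phi x i k' j := hk'3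
  _ ≤ sSup (lisSet x (Finset.Icc i j)) :=
      le_csSup (lisSet_bdd x _) (phi_mem x i j k' hk'1 hk'2)

end Stmt13

namespace Stmt13

open Finset

/-- Gap of the walk of `x` below its running maximum (letter `0` is an up-step). -/
def gap : {t : ℕ} → (Fin t → Fin 2) → ℕ
  | 0, _ => 0
  | _+1, x => if x (Fin.last _) = 0 then gap (Fin.init x) - 1 else gap (Fin.init x) + 1

lemma gap_snoc {t : ℕ} (x' : Fin t → Fin 2) (b : Fin 2) :
    gap (Fin.snoc x' b) = if b = 0 then gap x' - 1 else gap x' + 1 := by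
  show (if (Fin.snoc x' b : Fin (t+1) → Fin 2) (Fin.last t) = 0 then _ else _) = _
  rw [Fin.snoc_last, Fin.init_snoc]

def snocEquiv (t : ℕ) : ((Fin t → Fin 2) × Fin 2) ≃ (Fin (t+1) → Fin 2) where
  toFun p := Fin.snoc p.1 p.2
  invFun x := (Fin.init x, x (Fin.last t))
  left_inv := by
    rintro ⟨x', b⟩
    simp [Fin.init_snoc, Fin.snoc_last]
  right_inv := fun x => Fin.snoc_init_self x

lemma sum_snoc {t : ℕ} (f : (Fin (t+1) → Fin 2) → ℝ) :
    ∑ x, f x = ∑ x' : Fin t → Fin 2, ∑ b : Fin 2, f (Fin.snoc x' b) := by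
  rw [← Equiv.sum_comp (snocEquiv t) f, Fintype.sum_prod_type]
  rfl

variable (p q : ℝ)

noncomputable def pp {t : ℕ} (w : Fin t → Fin 2) : ℝ :=
  ∏ s, (if w s = 0 then p else 1 - p)

lemma pp_snoc {t : ℕ} (w' : Fin t → Fin 2) (a : Fin 2) :
    pp p (Fin.snoc w' a) = pp p w' * (if a = 0 then p else 1 - p) := by
  unfold pp
  rw [Fin.prod_univ_castSucc]
  congr 1
  · apply Finset.prod_congr rfl
    intro s _
    rw [Fin.snoc_castSucc]
  · rw [Fin.snoc_last]

noncomputable def mu : (t : ℕ) → (Fin t → Fin 2) → (Fin t → Fin 2) → ℝ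
  | 0, _, _ => 1
  | t+1, w, x =>
    let w' := Fin.init w
    let x' := Fin.init x
    let a := w (Fin.last t)
    let b := x (Fin.last t)
    let M0 : ℝ := ∑ y : Fin t → Fin 2, if gap y = 0 then mu t w' y else 0
    let phi : ℝ := if M0 = 0 then 0 else (q - p) / q * pp p w' / M0
    mu t w' x' *
      (if gap x' = 0 then
        (if a = 0 ∧ b = 0 then q * (1 - phi)
         else if a = 1 ∧ b = 0 then q * phi
         else if a = 1 ∧ b = 1 then 1 - q else 0)
       else
        (if a = 0 ∧ b = 0 then q
         else if a = 1 ∧ b = 1 then 1 - q else 0))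

noncomputable def M0 (t : ℕ) (w' : Fin t → Fin 2) : ℝ :=
  ∑ y : Fin t → Fin 2, if gap y = 0 then mu p q t w' y else 0

noncomputable def phiF (t : ℕ) (w' : Fin t → Fin 2) : ℝ :=
  if M0 p q t w' = 0 then 0 else (q - p) / q * pp p w' / M0 p q t w'

noncomputable def kstep (t : ℕ) (w' x' : Fin t → Fin 2) (a b : Fin 2) : ℝ :=
  if gap x' = 0 then
    (if a = 0 ∧ b = 0 then q * (1 - phiF p q t w')
     else if a = 1 ∧ b = 0 then q * phiF p q t w'
     else if a = 1 ∧ b = 1 then 1 - q else 0)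
  else
    (if a = 0 ∧ b = 0 then q
     else if a = 1 ∧ b = 1 then 1 - q else 0)

lemma mu_snoc {t : ℕ} (w' x' : Fin t → Fin 2) (a b : Fin 2) :
    mu p q (t+1) (Fin.snoc w' a) (Fin.snoc x' b)
      = mu p q t w' x' * kstep p q t w' x' a b := by
  show mu p q (t+1) _ _ = _
  rw [mu]
  simp only [Fin.init_snoc, Fin.snoc_last]
  rfl

noncomputable def Mk (k t : ℕ) (w' : Fin t → Fin 2) : ℝ :=
  ∑ y : Fin t → Fin 2, if k ≤ gap y then mu p q t w' y else 0

end Stmt13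

namespace Stmt13

open Finset

variable {p q : ℝ}

lemma pp_nonneg (hp0 : 0 ≤ p) (hp1 : p ≤ 1) {t : ℕ} (w : Fin t → Fin 2) :
    0 ≤ pp p w := by
  apply Finset.prod_nonneg
  intro s _
  by_cases h : w s = 0 <;> simp [h] <;> linarith

lemma kstep00 (t : ℕ) (w' x' : Fin t → Fin 2) :
    kstep p q t w' x' 0 0 = if gap x' = 0 then q * (1 - phiF p q t w') else q := by
  unfold kstep; norm_num

lemma kstep10 (t : ℕ) (w' x' : Fin t → Fin 2) :
    kstep p q t w' x' 1 0 = if gap x' = 0 then q * phiF p q t w' else 0 := by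
  unfold kstep; norm_num

lemma kstep01 (t : ℕ) (w' x' : Fin t → Fin 2) :
    kstep p q t w' x' 0 1 = 0 := by
  unfold kstep; norm_num

lemma kstep11 (t : ℕ) (w' x' : Fin t → Fin 2) :
    kstep p q t w' x' 1 1 = 1 - q := by
  unfold kstep; norm_num

section helpers

variable {t : ℕ}

lemma M0_nonneg (ih1 : ∀ w x, 0 ≤ mu p q t w x) (w : Fin t → Fin 2) :
    0 ≤ M0 p q t w := by
  apply Finset.sum_nonneg
  intro y _
  by_cases h : gap y = 0 <;> simp [h, ih1 w y]

lemma M0_add_Mk1 (ih2 : ∀ w, ∑ x, mu p q t w x = pp p w) (w : Fin t → Fin 2) :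
    M0 p q t w + Mk p q 1 t w = pp p w := by
  rw [← ih2 w]
  unfold M0 Mk
  rw [← Finset.sum_add_distrib]
  apply Finset.sum_congr rfl
  intro y _
  by_cases h : gap y = 0
  · simp [h]
  · have h1 : 1 ≤ gap y := Nat.one_le_iff_ne_zero.mpr h
    simp [h, h1]

lemma M0_ge (hp0 : 0 ≤ p) (hp1 : p ≤ 1) (hq2 : 1/2 ≤ q) (ih1 : ∀ w x, 0 ≤ mu p q t w x)
    (ih2 : ∀ w, ∑ x, mu p q t w x = pp p w)
    (ih4 : ∀ k w, Mk p q k t w ≤ (p/q)^k * pp p w) (w : Fin t → Fin 2) :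
    (q - p) / q * pp p w ≤ M0 p q t w := by
  have hq0 : 0 < q := by linarith
  have h1 := M0_add_Mk1 ih2 w
  have h2 := ih4 1 w
  have h3 : (p/q)^1 = p/q := pow_one _
  rw [h3] at h2
  have hppnn := pp_nonneg hp0 hp1 w
  have : M0 p q t w ≥ pp p w - p/q * pp p w := by linarith
  have he : pp p w - p/q * pp p w = (q - p)/q * pp p w := by
    field_simp
  linarith [he ▸ this]

lemma phiF_nonneg (hp0 : 0 ≤ p) (hp1 : p ≤ 1) (hq2 : 1/2 ≤ q) (hpq : p ≤ q)
    (ih1 : ∀ w x, 0 ≤ mu p q t w x) (w : Fin t → Fin 2) :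
    0 ≤ phiF p q t w := by
  unfold phiF
  by_cases h : M0 p q t w = 0
  · simp [h]
  · rw [if_neg h]
    have hq0 : 0 < q := by linarith
    have hM := M0_nonneg ih1 w
    have hM' : 0 < M0 p q t w := lt_of_le_of_ne hM (Ne.symm h)
    have h1 := pp_nonneg hp0 hp1 w
    have hq0 : 0 < q := by linarith
    have h2 : 0 ≤ (q - p)/q := div_nonneg (by linarith) (le_of_lt hq0)
    positivity

lemma phiF_le_one (hp0 : 0 ≤ p) (hp1 : p ≤ 1) (hq2 : 1/2 ≤ q)
    (ih1 : ∀ w x, 0 ≤ mu p q t w x)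
    (ih2 : ∀ w, ∑ x, mu p q t w x = pp p w)
    (ih4 : ∀ k w, Mk p q k t w ≤ (p/q)^k * pp p w) (w : Fin t → Fin 2) :
    phiF p q t w ≤ 1 := by
  unfold phiF
  by_cases h : M0 p q t w = 0
  · simp [h]
  · rw [if_neg h]
    have hM := M0_nonneg ih1 w
    have hM' : 0 < M0 p q t w := lt_of_le_of_ne hM (Ne.symm h)
    have hge := M0_ge hp0 hp1 hq2 ih1 ih2 ih4 w
    rw [div_le_one hM']
    exact hge

lemma qphiM0 (hp0 : 0 ≤ p) (hp1 : p ≤ 1) (hq2 : 1/2 ≤ q) (hpq : p ≤ q)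
    (ih1 : ∀ w x, 0 ≤ mu p q t w x)
    (ih2 : ∀ w, ∑ x, mu p q t w x = pp p w)
    (ih4 : ∀ k w, Mk p q k t w ≤ (p/q)^k * pp p w) (w : Fin t → Fin 2) :
    q * phiF p q t w * M0 p q t w = (q - p) * pp p w := by
  have hq0 : 0 < q := by linarith
  unfold phiF
  by_cases h : M0 p q t w = 0
  · rw [if_pos h, h]
    have hge := M0_ge hp0 hp1 hq2 ih1 ih2 ih4 w
    rw [h] at hge
    have hpp := pp_nonneg hp0 hp1 w
    have hsp : 0 ≤ (q - p)/q * pp p w := by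
      apply mul_nonneg _ hpp
      apply div_nonneg (by linarith) (le_of_lt hq0)
    have : (q - p)/q * pp p w = 0 := le_antisymm hge hsp
    have h2 : (q - p) * pp p w = q * ((q - p)/q * pp p w) := by
      field_simp
    rw [h2, this]
    ring
  · rw [if_neg h]
    field_simp

end helpers

end Stmt13

namespace Stmt13

open Finset

lemma cnt_snoc {t : ℕ} (x' : Fin t → Fin 2) (b : Fin 2) (v : Fin 2) (lo hi : ℕ)
    (h : hi ≤ t) :
    cnt (Fin.snoc x' b) v lo hi = cnt x' v lo hi := by
  unfold cnt
  have hset : (Finset.univ.filter fun u : Fin (t+1) =>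
      lo ≤ (u : ℕ) ∧ (u : ℕ) < hi ∧ (Fin.snoc x' b : Fin (t+1) → Fin 2) u = v)
    = (Finset.univ.filter fun u : Fin t =>
      lo ≤ (u : ℕ) ∧ (u : ℕ) < hi ∧ x' u = v).map Fin.castSuccEmb := by
    ext u
    simp only [Finset.mem_filter, Finset.mem_univ, true_and, Finset.mem_map]
    constructor
    · rintro ⟨h1, h2, h3⟩
      have hlt : (u : ℕ) < t := by omega
      refine ⟨⟨(u : ℕ), hlt⟩, ⟨h1, h2, ?_⟩, ?_⟩
      · have hc : Fin.castSucc (⟨(u : ℕ), hlt⟩ : Fin t) = u := by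
          apply Fin.ext; simp
        have hs : (Fin.snoc x' b : Fin (t+1) → Fin 2) (Fin.castSucc ⟨(u : ℕ), hlt⟩)
            = x' ⟨(u : ℕ), hlt⟩ := by rw [Fin.snoc_castSucc]
        rw [hc] at hs
        exact hs.symm.trans h3
      · apply Fin.ext; simp [Fin.castSuccEmb]
    · rintro ⟨v', ⟨h1, h2, h3⟩, rfl⟩
      have hc : ((Fin.castSuccEmb v' : Fin (t+1)) : ℕ) = (v' : ℕ) := rfl
      refine ⟨by omega, by omega, ?_⟩
      have hs : (Fin.snoc x' b : Fin (t+1) → Fin 2) (Fin.castSucc v') = x' v' := by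
        rw [Fin.snoc_castSucc]
      exact hs.trans h3
  rw [hset, Finset.card_map]

lemma cnt_le_gap : ∀ (t : ℕ) (x : Fin t → Fin 2) (s' : ℕ),
    cnt x 1 s' t ≤ cnt x 0 s' t + gap x := by
  intro t
  induction t with
  | zero =>
    intro x s'
    rw [cnt_eq_zero x 1 (Nat.zero_le s')]
    omega
  | succ t ih =>
    intro x s'
    have hx : x = Fin.snoc (Fin.init x) (x (Fin.last t)) := (Fin.snoc_init_self x).symm
    set x' := Fin.init x with hx'
    set b := x (Fin.last t) with hb
    by_cases hs : s' ≤ t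
    · have hlast : ((Fin.last t : Fin (t+1)) : ℕ) = t := rfl
      have e1 : cnt x 1 s' (t + 1) = cnt x 1 s' t + (if b = 1 then 1 else 0) := by
        have := cnt_succ x 1 (lo := s') (Fin.last t) (by rw [hlast]; exact hs)
        rw [hlast] at this
        exact this
      have e0 : cnt x 0 s' (t + 1) = cnt x 0 s' t + (if b = 0 then 1 else 0) := by
        have := cnt_succ x 0 (lo := s') (Fin.last t) (by rw [hlast]; exact hs)
        rw [hlast] at this
        exact this
      have e2 : cnt x 1 s' t = cnt x' 1 s' t := by
        conv_lhs => rw [hx]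
        exact cnt_snoc x' b 1 s' t le_rfl
      have e3 : cnt x 0 s' t = cnt x' 0 s' t := by
        conv_lhs => rw [hx]
        exact cnt_snoc x' b 0 s' t le_rfl
      have e4 : gap x = if b = 0 then gap x' - 1 else gap x' + 1 := by
        conv_lhs => rw [hx]
        exact gap_snoc x' b
      have hih := ih x' s'
      rcases fin2_cases b with hb0 | hb1
      · rw [e1, e0, e2, e3, e4, hb0]
        have d1 : (if (0:Fin 2) = 1 then (1:ℕ) else 0) = 0 := by decide
        have d2 : (if (0:Fin 2) = 0 then (1:ℕ) else 0) = 1 := by decide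
        have d3 : (if (0:Fin 2) = 0 then gap x' - 1 else gap x' + 1) = gap x' - 1 :=
          if_pos rfl
        rw [d1, d2, d3]
        omega
      · rw [e1, e0, e2, e3, e4, hb1]
        have d1 : (if (1:Fin 2) = 1 then (1:ℕ) else 0) = 1 := by decide
        have d2 : (if (1:Fin 2) = 0 then (1:ℕ) else 0) = 0 := by decide
        have d3 : (if (1:Fin 2) = 0 then gap x' - 1 else gap x' + 1) = gap x' + 1 := by
          rw [if_neg (by decide)]
        rw [d1, d2, d3]
        omega
    · rw [cnt_eq_zero x 1 (by omega)]
      omega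

lemma RecN_snoc {t : ℕ} (x' : Fin t → Fin 2) (b : Fin 2) (s : Fin t)
    (h : RecN x' s) : RecN (Fin.snoc x' b) (Fin.castSucc s) := by
  constructor
  · rw [Fin.snoc_castSucc]
    exact h.1
  · intro s'
    have hcs : ((Fin.castSucc s : Fin (t+1)) : ℕ) = (s : ℕ) := rfl
    rw [hcs, cnt_snoc x' b 1 s' s (le_of_lt s.isLt),
      cnt_snoc x' b 0 s' s (le_of_lt s.isLt)]
    exact h.2 s'

lemma RecN_last {t : ℕ} (x' : Fin t → Fin 2) (hg : gap x' = 0) :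
    RecN (Fin.snoc x' (0 : Fin 2)) (Fin.last t) := by
  constructor
  · rw [Fin.snoc_last]
  · intro s'
    have hlast : ((Fin.last t : Fin (t+1)) : ℕ) = t := rfl
    rw [hlast, cnt_snoc x' 0 1 s' t le_rfl, cnt_snoc x' 0 0 s' t le_rfl]
    have := cnt_le_gap t x' s'
    omega

lemma Rel_snoc {t : ℕ} {w' x' : Fin t → Fin 2} (hrel : Rel w' x') (a b : Fin 2)
    (hab : (a = 0 ∧ b = 0) ∨ (a = 1 ∧ b = 1) ∨ (a = 1 ∧ b = 0 ∧ gap x' = 0)) :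
    Rel (Fin.snoc w' a) (Fin.snoc x' b) := by
  intro s
  refine Fin.lastCases ?_ ?_ s
  · rw [show (Fin.snoc w' a : Fin (t+1) → Fin 2) (Fin.last t) = a from Fin.snoc_last _ _,
      show (Fin.snoc x' b : Fin (t+1) → Fin 2) (Fin.last t) = b from Fin.snoc_last _ _]
    rcases hab with ⟨ha, hb⟩ | ⟨ha, hb⟩ | ⟨ha, hb, hg⟩
    · subst ha; subst hb
      exact ⟨fun _ => rfl, fun h _ => absurd h (by decide)⟩
    · subst ha; subst hb
      exact ⟨fun h => absurd h (by decide), fun _ h => absurd h (by decide)⟩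
    · subst ha; subst hb
      refine ⟨fun h => absurd h (by decide), fun _ _ => ?_⟩
      exact RecN_last x' hg
  · intro i
    rw [Fin.snoc_castSucc, Fin.snoc_castSucc]
    refine ⟨fun h => (hrel i).1 h, fun h1 h2 => ?_⟩
    exact RecN_snoc x' b i ((hrel i).2 h1 h2)

end Stmt13

namespace Stmt13

open Finset

variable {p q : ℝ}

lemma kstep_nonneg (hq1 : q ≤ 1) (hq2 : 1/2 ≤ q) {t : ℕ} {w' : Fin t → Fin 2}
    (h0 : 0 ≤ phiF p q t w') (h1 : phiF p q t w' ≤ 1) (x' : Fin t → Fin 2) (a b : Fin 2) :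
    0 ≤ kstep p q t w' x' a b := by
  have hq0 : (0:ℝ) ≤ q := by linarith
  unfold kstep
  split_ifs <;>
    nlinarith [mul_nonneg hq0 (sub_nonneg.mpr h1), mul_nonneg hq0 h0]

lemma mu_zero (w x : Fin 0 → Fin 2) : mu p q 0 w x = 1 := rfl

lemma master (hp0 : 0 ≤ p) (hp1 : p ≤ 1) (hq1 : q ≤ 1) (hq2 : 1/2 ≤ q)
    (hpq : p ≤ q) (hqq : q * (1 - q) ≤ p * (1 - p)) :
    ∀ t : ℕ, (∀ w x : Fin t → Fin 2, 0 ≤ mu p q t w x)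
      ∧ (∀ w : Fin t → Fin 2, ∑ x, mu p q t w x = pp p w)
      ∧ (∀ x : Fin t → Fin 2, ∑ w, mu p q t w x = pp q x)
      ∧ (∀ (k : ℕ) (w : Fin t → Fin 2), Mk p q k t w ≤ (p/q)^k * pp p w)
      ∧ (∀ w x : Fin t → Fin 2, mu p q t w x ≠ 0 → Rel w x) := by
  have hq0 : (0:ℝ) < q := by linarith
  intro t
  induction t with
  | zero =>
    refine ⟨fun w x => by rw [mu_zero]; norm_num,
      fun w => ?_, fun x => ?_, fun k w => ?_, fun w x _ => fun s => s.elim0⟩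
    · rw [show (pp p w : ℝ) = 1 from Finset.prod_of_isEmpty _,
        Finset.sum_congr rfl (fun y _ => mu_zero w y), Finset.sum_const]
      simp
    · rw [show (pp q x : ℝ) = 1 from Finset.prod_of_isEmpty _,
        Finset.sum_congr rfl (fun y _ => mu_zero y x), Finset.sum_const]
      simp
    · unfold Mk
      rw [show (pp p w : ℝ) = 1 from Finset.prod_of_isEmpty _]
      rcases Nat.eq_zero_or_pos k with hk | hk
      · subst hk
        rw [Finset.sum_congr rfl
          (fun y _ => by rw [if_pos (Nat.zero_le _), mu_zero]), Finset.sum_const]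
        simp
      · rw [Finset.sum_congr rfl (fun y _ => by
          rw [if_neg (by rw [show gap y = 0 from rfl]; omega)]), Finset.sum_const]
        simp only [smul_zero]
        positivity
  | succ t ih =>
    obtain ⟨ih1, ih2, ih3, ih4, ih5⟩ := ih
    have hph0 : ∀ w' : Fin t → Fin 2, 0 ≤ phiF p q t w' :=
      phiF_nonneg hp0 hp1 hq2 hpq ih1
    have hph1 : ∀ w' : Fin t → Fin 2, phiF p q t w' ≤ 1 :=
      phiF_le_one hp0 hp1 hq2 ih1 ih2 ih4
    have hqpm : ∀ w' : Fin t → Fin 2,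
        q * phiF p q t w' * M0 p q t w' = (q - p) * pp p w' :=
      qphiM0 hp0 hp1 hq2 hpq ih1 ih2 ih4
    -- P1
    have hP1 : ∀ w x : Fin (t+1) → Fin 2, 0 ≤ mu p q (t+1) w x := by
      intro w x
      rw [← Fin.snoc_init_self w, ← Fin.snoc_init_self x, mu_snoc]
      exact mul_nonneg (ih1 _ _)
        (kstep_nonneg hq1 hq2 (hph0 _) (hph1 _) _ _ _)
    -- P2
    have hP2 : ∀ w : Fin (t+1) → Fin 2, ∑ x, mu p q (t+1) w x = pp p w := by
      intro w
      set w' := Fin.init w with hw'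
      set a := w (Fin.last t) with ha'
      have hw : w = Fin.snoc w' a := (Fin.snoc_init_self w).symm
      rw [hw, sum_snoc (f := fun x => mu p q (t+1) (Fin.snoc w' a) x)]
      have hinner : ∀ x' : Fin t → Fin 2,
          ∑ b : Fin 2, mu p q (t+1) (Fin.snoc w' a) (Fin.snoc x' b)
          = mu p q t w' x' * (kstep p q t w' x' a 0 + kstep p q t w' x' a 1) := by
        intro x'
        rw [Fin.sum_univ_two, mu_snoc, mu_snoc]
        ring
      rw [Finset.sum_congr rfl (fun x' _ => hinner x')]
      rcases fin2_cases a with ha | ha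
      · rw [ha]
        have hpt : ∀ x' : Fin t → Fin 2,
            mu p q t w' x' * (kstep p q t w' x' 0 0 + kstep p q t w' x' 0 1)
            = q * mu p q t w' x'
              - (q * phiF p q t w') * (if gap x' = 0 then mu p q t w' x' else 0) := by
          intro x'
          rw [kstep00, kstep01]
          by_cases hg : gap x' = 0
          · rw [if_pos hg, if_pos hg]; ring
          · rw [if_neg hg, if_neg hg]; ring
        rw [Finset.sum_congr rfl (fun x' _ => hpt x'), Finset.sum_sub_distrib,
          ← Finset.mul_sum, ← Finset.mul_sum, ih2 w']
        have hM0 : ∑ x' : Fin t → Fin 2, (if gap x' = 0 then mu p q t w' x' else 0)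
            = M0 p q t w' := rfl
        rw [hM0, pp_snoc, if_pos rfl]
        have := hqpm w'
        nlinarith [this]
      · rw [ha]
        have hpt : ∀ x' : Fin t → Fin 2,
            mu p q t w' x' * (kstep p q t w' x' 1 0 + kstep p q t w' x' 1 1)
            = (1 - q) * mu p q t w' x'
              + (q * phiF p q t w') * (if gap x' = 0 then mu p q t w' x' else 0) := by
          intro x'
          rw [kstep10, kstep11]
          by_cases hg : gap x' = 0
          · rw [if_pos hg, if_pos hg]; ring
          · rw [if_neg hg, if_neg hg]; ring
        rw [Finset.sum_congr rfl (fun x' _ => hpt x'), Finset.sum_add_distrib,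
          ← Finset.mul_sum, ← Finset.mul_sum, ih2 w']
        have hM0 : ∑ x' : Fin t → Fin 2, (if gap x' = 0 then mu p q t w' x' else 0)
            = M0 p q t w' := rfl
        rw [hM0, pp_snoc, if_neg (by decide)]
        have := hqpm w'
        nlinarith [this]
    -- P3
    have hP3 : ∀ x : Fin (t+1) → Fin 2, ∑ w, mu p q (t+1) w x = pp q x := by
      intro x
      set x' := Fin.init x with hx'
      set b := x (Fin.last t) with hb'
      have hx : x = Fin.snoc x' b := (Fin.snoc_init_self x).symm
      rw [hx, sum_snoc (f := fun w => mu p q (t+1) w (Fin.snoc x' b))]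
      have hinner : ∀ w' : Fin t → Fin 2,
          ∑ a : Fin 2, mu p q (t+1) (Fin.snoc w' a) (Fin.snoc x' b)
          = mu p q t w' x' * (kstep p q t w' x' 0 b + kstep p q t w' x' 1 b) := by
        intro w'
        rw [Fin.sum_univ_two, mu_snoc, mu_snoc]
        ring
      rw [Finset.sum_congr rfl (fun w' _ => hinner w')]
      rcases fin2_cases b with hb | hb
      · rw [hb]
        have hpt : ∀ w' : Fin t → Fin 2,
            mu p q t w' x' * (kstep p q t w' x' 0 0 + kstep p q t w' x' 1 0)
            = q * mu p q t w' x' := by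
          intro w'
          rw [kstep00, kstep10]
          by_cases hg : gap x' = 0
          · rw [if_pos hg, if_pos hg]; ring
          · rw [if_neg hg, if_neg hg]; ring
        rw [Finset.sum_congr rfl (fun w' _ => hpt w'), ← Finset.mul_sum, ih3 x',
          pp_snoc, if_pos rfl]
        ring
      · rw [hb]
        have hpt : ∀ w' : Fin t → Fin 2,
            mu p q t w' x' * (kstep p q t w' x' 0 1 + kstep p q t w' x' 1 1)
            = (1 - q) * mu p q t w' x' := by
          intro w'
          rw [kstep01, kstep11]
          ring
        rw [Finset.sum_congr rfl (fun w' _ => hpt w'), ← Finset.mul_sum, ih3 x',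
          pp_snoc, if_neg (by decide)]
        ring
    -- P4
    have hP4 : ∀ (k : ℕ) (w : Fin (t+1) → Fin 2),
        Mk p q k (t+1) w ≤ (p/q)^k * pp p w := by
      intro k w
      rcases k with _ | m
      · unfold Mk
        rw [Finset.sum_congr rfl (fun y _ => if_pos (Nat.zero_le _)), hP2 w,
          pow_zero, one_mul]
      · set w' := Fin.init w with hw'
        set a := w (Fin.last t) with ha'
        have hw : w = Fin.snoc w' a := (Fin.snoc_init_self w).symm
        rw [hw]
        unfold Mk
        rw [sum_snoc (f := fun y =>
          if m+1 ≤ gap y then mu p q (t+1) (Fin.snoc w' a) y else 0)]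
        have hinner : ∀ x' : Fin t → Fin 2,
            (∑ b : Fin 2, if m+1 ≤ gap (Fin.snoc x' b)
              then mu p q (t+1) (Fin.snoc w' a) (Fin.snoc x' b) else 0)
            = (if m+1 ≤ gap x' - 1 then mu p q t w' x' * kstep p q t w' x' a 0 else 0)
              + (if m+1 ≤ gap x' + 1 then mu p q t w' x' * kstep p q t w' x' a 1 else 0) := by
          intro x'
          rw [Fin.sum_univ_two]
          congr 1
          · rw [gap_snoc, if_pos rfl, mu_snoc]
          · rw [gap_snoc, if_neg (by decide : ¬((1:Fin 2) = 0)), mu_snoc]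
        rw [Finset.sum_congr rfl (fun x' _ => hinner x')]
        rcases fin2_cases a with ha | ha
        · rw [ha]
          have hpt : ∀ x' : Fin t → Fin 2,
              (if m+1 ≤ gap x' - 1 then mu p q t w' x' * kstep p q t w' x' 0 0 else 0)
              + (if m+1 ≤ gap x' + 1 then mu p q t w' x' * kstep p q t w' x' 0 1 else 0)
              = q * (if m+2 ≤ gap x' then mu p q t w' x' else 0) := by
            intro x'
            rw [kstep01, mul_zero, ite_self, add_zero]
            by_cases h2 : m+2 ≤ gap x'
            · rw [if_pos (by omega : m+1 ≤ gap x' - 1), kstep00,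
                if_neg (by omega : ¬ gap x' = 0), if_pos h2]
              ring
            · rw [if_neg (by omega : ¬ m+1 ≤ gap x' - 1), if_neg h2, mul_zero]
          rw [Finset.sum_congr rfl (fun x' _ => hpt x'), ← Finset.mul_sum]
          have hMk : ∑ x' : Fin t → Fin 2, (if m+2 ≤ gap x' then mu p q t w' x' else 0)
              = Mk p q (m+2) t w' := rfl
          rw [hMk]
          calc q * Mk p q (m+2) t w'
              ≤ q * ((p/q)^(m+2) * pp p w') :=
                mul_le_mul_of_nonneg_left (ih4 (m+2) w') (le_of_lt hq0)
            _ = (p/q)^(m+1) * pp p (Fin.snoc w' 0) := by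
                rw [pp_snoc, if_pos rfl, pow_succ]
                field_simp
        · rw [ha]
          have hpt : ∀ x' : Fin t → Fin 2,
              (if m+1 ≤ gap x' - 1 then mu p q t w' x' * kstep p q t w' x' 1 0 else 0)
              + (if m+1 ≤ gap x' + 1 then mu p q t w' x' * kstep p q t w' x' 1 1 else 0)
              = (1 - q) * (if m ≤ gap x' then mu p q t w' x' else 0) := by
            intro x'
            rw [kstep11]
            have h1 : (if m+1 ≤ gap x' - 1
                then mu p q t w' x' * kstep p q t w' x' 1 0 else 0) = 0 := by
              by_cases h2 : m+1 ≤ gap x' - 1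
              · rw [if_pos h2, kstep10, if_neg (by omega : ¬ gap x' = 0)]
                ring
              · rw [if_neg h2]
            rw [h1, zero_add]
            by_cases h3 : m ≤ gap x'
            · rw [if_pos (by omega : m+1 ≤ gap x' + 1), if_pos h3]; ring
            · rw [if_neg (by omega : ¬ m+1 ≤ gap x' + 1), if_neg h3, mul_zero]
          rw [Finset.sum_congr rfl (fun x' _ => hpt x'), ← Finset.mul_sum]
          have hMk : ∑ x' : Fin t → Fin 2, (if m ≤ gap x' then mu p q t w' x' else 0)
              = Mk p q m t w' := rfl
          rw [hMk]
          have hkey : (1-q) * (p/q)^m ≤ (p/q)^(m+1) * (1-p) := by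
            have h5 : (1-q) ≤ p * (1-p) / q := by
              rw [le_div_iff₀ hq0]
              nlinarith
            have h6 : (0:ℝ) ≤ (p/q)^m := pow_nonneg (div_nonneg hp0 (le_of_lt hq0)) m
            calc (1-q)*(p/q)^m ≤ (p*(1-p)/q) * (p/q)^m :=
                  mul_le_mul_of_nonneg_right h5 h6
              _ = (p/q)^(m+1) * (1-p) := by
                  rw [pow_succ]
                  field_simp
          calc (1-q) * Mk p q m t w'
              ≤ (1-q) * ((p/q)^m * pp p w') :=
                mul_le_mul_of_nonneg_left (ih4 m w') (by linarith)
            _ = ((1-q) * (p/q)^m) * pp p w' := by ring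
            _ ≤ ((p/q)^(m+1) * (1-p)) * pp p w' :=
                mul_le_mul_of_nonneg_right hkey (pp_nonneg hp0 hp1 w')
            _ = (p/q)^(m+1) * pp p (Fin.snoc w' 1) := by
                rw [pp_snoc, if_neg (by decide)]
                ring
    -- P5
    have hP5 : ∀ w x : Fin (t+1) → Fin 2, mu p q (t+1) w x ≠ 0 → Rel w x := by
      intro w x hne
      set w' := Fin.init w with hw'
      set a := w (Fin.last t) with ha'
      set x' := Fin.init x with hx'
      set b := x (Fin.last t) with hb'
      have hw : w = Fin.snoc w' a := (Fin.snoc_init_self w).symm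
      have hx : x = Fin.snoc x' b := (Fin.snoc_init_self x).symm
      rw [hw, hx] at hne ⊢
      rw [mu_snoc] at hne
      have hmu : mu p q t w' x' ≠ 0 := fun h => hne (by rw [h, zero_mul])
      have hk : kstep p q t w' x' a b ≠ 0 := fun h => hne (by rw [h, mul_zero])
      apply Rel_snoc (ih5 w' x' hmu)
      rcases fin2_cases a with ha | ha <;> rcases fin2_cases b with hb | hb
      · exact Or.inl ⟨ha, hb⟩
      · exfalso
        apply hk
        rw [ha, hb, kstep01]
      · refine Or.inr (Or.inr ⟨ha, hb, ?_⟩)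
        by_contra hg
        apply hk
        rw [ha, hb, kstep10, if_neg hg]
      · exact Or.inr (Or.inl ⟨ha, hb⟩)
    exact ⟨hP1, hP2, hP3, hP4, hP5⟩

end Stmt13

namespace Stmt13

open Finset

def flip2 (v : Fin 2) : Fin 2 := if v = 0 then 1 else 0

def rc {n : ℕ} (u : Fin n → Fin 2) : Fin n → Fin 2 := fun t => flip2 (u (Fin.rev t))

lemma flip2_flip2 (v : Fin 2) : flip2 (flip2 v) = v := by
  rcases fin2_cases v with h | h <;> rw [h] <;> decide

lemma rc_rc {n : ℕ} (u : Fin n → Fin 2) : rc (rc u) = u := by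
  funext t
  unfold rc
  rw [Fin.rev_rev, flip2_flip2]

lemma rc_involutive {n : ℕ} : Function.Involutive (rc : (Fin n → Fin 2) → _) := rc_rc

lemma flip2_antitone {v v' : Fin 2} (h : v ≤ v') : flip2 v' ≤ flip2 v := by
  rcases fin2_cases v with h1 | h1 <;> rcases fin2_cases v' with h2 | h2 <;>
    rw [h1, h2] <;> first | decide | (rw [h1, h2] at h; exact absurd h (by decide))

lemma lisOn_rc_le {n : ℕ} (u : Fin n → Fin 2) (i j : Fin n) :
    lisOn u (Finset.Icc i j) ≤ lisOn (rc u) (Finset.Icc j.rev i.rev) := by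
  rw [lisOn_eq, lisOn_eq]
  apply csSup_le (lisSet_nonempty u _)
  rintro m ⟨S, hS, hchain, rfl⟩
  apply le_csSup (lisSet_bdd (rc u) _)
  refine ⟨S.image Fin.rev, ?_, ?_, ?_⟩
  · intro t ht
    rw [Finset.mem_image] at ht
    obtain ⟨s, hs, rfl⟩ := ht
    have := hS hs
    rw [Finset.mem_Icc] at this ⊢
    exact ⟨Fin.rev_le_rev.mpr this.2, Fin.rev_le_rev.mpr this.1⟩
  · intro a ha b hb hab
    rw [Finset.mem_image] at ha hb
    obtain ⟨s, hs, rfl⟩ := ha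
    obtain ⟨s', hs', rfl⟩ := hb
    have hss : s' ≤ s := Fin.rev_le_rev.mp hab
    have := hchain s' hs' s hs hss
    show flip2 (u (Fin.rev (Fin.rev s))) ≤ flip2 (u (Fin.rev (Fin.rev s')))
    rw [Fin.rev_rev, Fin.rev_rev]
    exact flip2_antitone this
  · exact Finset.card_image_of_injective S Fin.rev_injective

lemma sum_rc {n : ℕ} (f : (Fin n → Fin 2) → ℝ) :
    ∑ x, f (rc x) = ∑ x, f x :=
  Equiv.sum_comp (rc_involutive.toPerm) f

lemma pp_rc {n : ℕ} (r : ℝ) (u : Fin n → Fin 2) :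
    pp (1 - r) (rc u) = ∏ t, (if u t = 0 then r else 1 - r) := by
  unfold pp rc
  rw [← Equiv.prod_comp (Fin.revPerm) (fun t => if u t = 0 then r else 1 - r)]
  apply Finset.prod_congr rfl
  intro t _
  show (if flip2 (u (Fin.rev t)) = 0 then 1 - r else 1 - (1 - r))
    = (if u (Fin.revPerm t) = 0 then r else 1 - r)
  have : Fin.revPerm t = Fin.rev t := rfl
  rw [this]
  rcases fin2_cases (u (Fin.rev t)) with h | h <;> rw [h]
  · rw [show flip2 0 = 1 from rfl, if_neg (by decide), if_pos rfl]
    ring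
  · rw [show flip2 1 = 0 from rfl, if_pos rfl, if_neg (by decide)]

lemma hext_mul (p q : ℝ) (hext : |p - 1/2| ≤ |q - 1/2|) :
    q * (1 - q) ≤ p * (1 - p) := by
  have h2 := mul_self_le_mul_self (abs_nonneg (p - 1/2)) hext
  rw [abs_mul_abs_self, abs_mul_abs_self] at h2
  nlinarith

end Stmt13

open Stmt13 in
/-- if the `q`-biased distribution on `{1,2}^n` is at least as extreme as the
`p`-biased one (`|q - 1/2| ≥ |p - 1/2|`), then they admit a coupling `(w, x)` such that for all
`1 ≤ i ≤ j ≤ n`, `LIS(x[i..j]) ≥ LIS(w[i..j])` always.  Here the letter `1` (encoded `0 : Fin 2`)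
has probability `p` resp. `q`, and the coupling is given by a joint distribution `μ` with the
two biased product distributions as marginals. -/
theorem stmt_13 (n : ℕ) (p q : ℝ)
    (hp0 : 0 ≤ p) (hp1 : p ≤ 1) (hq0 : 0 ≤ q) (hq1 : q ≤ 1)
    (hext : |p - 1/2| ≤ |q - 1/2|) :
    ∃ μ : (Fin n → Fin 2) → (Fin n → Fin 2) → ℝ,
      (∀ w x, 0 ≤ μ w x) ∧
      (∀ w, ∑ x : Fin n → Fin 2, μ w x = ∏ t, (if w t = 0 then p else 1 - p)) ∧
      (∀ x, ∑ w : Fin n → Fin 2, μ w x = ∏ t, (if x t = 0 then q else 1 - q)) ∧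
      (∀ w x, μ w x ≠ 0 → ∀ i j : Fin n, i ≤ j →
        lisOn w (Finset.Icc i j) ≤ lisOn x (Finset.Icc i j)) := by
  have hqq := hext_mul p q hext
  by_cases hq2 : 1/2 ≤ q
  · -- direct construction
    have hpq : p ≤ q := by
      have h1 := le_abs_self (p - 1/2)
      have h2 : |q - 1/2| = q - 1/2 := abs_of_nonneg (by linarith)
      linarith [hext, h2 ▸ hext]
    obtain ⟨m1, m2, m3, _, m5⟩ := master hp0 hp1 hq1 hq2 hpq hqq n
    refine ⟨mu p q n, m1, fun w => m2 w, fun x => m3 x, ?_⟩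
    intro w x hne i j hij
    exact rel_lisOn (m5 w x hne) i j hij
  · -- symmetric case via reverse-complement
    push_neg at hq2
    have hq'2 : 1/2 ≤ 1 - q := by linarith
    have hqp : q ≤ p := by
      have h1 : 1/2 - p ≤ |p - 1/2| := by
        rw [abs_sub_comm]
        exact le_abs_self _
      have h2 : |q - 1/2| = 1/2 - q := by
        rw [abs_sub_comm]
        exact abs_of_nonneg (by linarith)
      linarith [hext, h2 ▸ hext]
    have hp'q' : (1 - p : ℝ) ≤ 1 - q := by linarith
    have hqq' : (1 - q) * (1 - (1 - q)) ≤ (1 - p) * (1 - (1 - p)) := by nlinarith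
    obtain ⟨m1, m2, m3, _, m5⟩ :=
      master (p := 1 - p) (q := 1 - q) (by linarith) (by linarith) (by linarith)
        hq'2 hp'q' hqq' n
    refine ⟨fun w x => mu (1 - p) (1 - q) n (rc w) (rc x), fun w x => m1 _ _, ?_, ?_, ?_⟩
    · intro w
      rw [sum_rc (fun y => mu (1 - p) (1 - q) n (rc w) y), m2 (rc w)]
      exact pp_rc p w
    · intro x
      rw [sum_rc (fun y => mu (1 - p) (1 - q) n y (rc x)), m3 (rc x)]
      exact pp_rc q x
    · intro w x hne i j hij
      have hrel := m5 (rc w) (rc x) hne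
      calc lisOn w (Finset.Icc i j)
          ≤ lisOn (rc w) (Finset.Icc j.rev i.rev) := lisOn_rc_le w i j
        _ ≤ lisOn (rc x) (Finset.Icc j.rev i.rev) :=
            rel_lisOn hrel j.rev i.rev (Fin.rev_le_rev.mpr hij)
        _ ≤ lisOn (rc (rc x)) (Finset.Icc i.rev.rev j.rev.rev) :=
            lisOn_rc_le (rc x) j.rev i.rev
        _ = lisOn x (Finset.Icc i j) := by rw [rc_rc, Fin.rev_rev, Fin.rev_rev]
end
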